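/- For TIOTSs P₀ and P₁ such that the alphabet of P₀ dominates that of P₁, the quotient P₀ % P₁ is substitutively equivalent to the derived operator (P₀¬ ∥ P₁)¬: P₀ % P₁ ≃ (P₀¬ ∥ P₁)¬. -/

import Mathlib

open Classical

namespace TSpec

/-- Positive real time delays. -/
abbrev Delay : Type := {d : ℝ // 0 < d}

/-- Sum of two positive delays. -/
def dsum (d e : Delay) : Delay := ⟨d.1 + e.1, add_pos d.2 e.2⟩

/-- Timed actions over an action alphabet `Act`: visible actions or positive delays. -/
inductive TAct (Act : Type) : Type where
  | act : Act → TAct Act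
  | delay : Delay → TAct Act

/-- A timed action is a delay. -/
def TAct.isDelay {Act : Type} : TAct Act → Prop
  | .act _ => False
  | .delay _ => True

/-- A timed action is valid for a set `A` of visible actions:
visible actions must belong to `A`, delays are always valid.
(For `A = O` this expresses membership in the timed outputs `tO = O ⊎ ℝ>0`,
for `A = I ∪ O` membership in the timed alphabet `tA`.) -/
def TAct.valid {Act : Type} (A : Set Act) : TAct Act → Prop
  | .act a => a ∈ A
  | .delay _ => True

/-- Timed words: finite sequences of timed actions. -/
abbrev TWord (Act : Type) := List (TAct Act)

/-- Well-formed timed word: no two adjacent delays (reals). -/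
def IsTWord {Act : Type} (w : TWord Act) : Prop :=
  List.Chain' (fun x y => ¬ (TAct.isDelay x ∧ TAct.isDelay y)) w

/-- Well-formed timed word over the alphabet `A`. -/
def ValidW {Act : Type} (A : Set Act) (w : TWord Act) : Prop :=
  IsTWord w ∧ ∀ α ∈ w, TAct.valid A α

/-- Concatenation of timed words, coalescing (summing) adjacent delays. -/
def tcat {Act : Type} (w w' : TWord Act) : TWord Act :=
  match w.getLast?, w' with
  | some (TAct.delay d), TAct.delay e :: rest => w.dropLast ++ TAct.delay (dsum d e) :: rest
  | _, _ => w ++ w'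

/-- `Pref w₀ w`: `w₀` is a prefix of `w` (w.r.t. coalescing concatenation). -/
def Pref {Act : Type} (w₀ w : TWord Act) : Prop := ∃ w₁, tcat w₀ w₁ = w

/-- Strict prefix. -/
def SPref {Act : Type} (w₀ w : TWord Act) : Prop := Pref w₀ w ∧ w₀ ≠ w

/-- `X · tA*`: all extensions of words in `X` by timed words over the alphabet `A`. -/
def Ext {Act : Type} (A : Set Act) (X : Set (TWord Act)) : Set (TWord Act) :=
  {w | ∃ w₀ ∈ X, ∃ w₁, ValidW A w₁ ∧ w = tcat w₀ w₁}

/-- `X · ℝ≥0`: all extensions of words in `X` by a (possibly zero) delay. -/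
def ExtDelay {Act : Type} (X : Set (TWord Act)) : Set (TWord Act) :=
  X ∪ {w | ∃ w₀ ∈ X, ∃ d : Delay, w = tcat w₀ [TAct.delay d]}

/-- `w` is a time-extension of `w₀`: equal, or extended by a single delay. -/
def TimeExt {Act : Type} (w₀ w : TWord Act) : Prop :=
  w = w₀ ∨ ∃ d : Delay, w = tcat w₀ [TAct.delay d]

/-- States of a TIOTS: plain states together with the inconsistent state `⊥`
and the timestop state `⊤`. -/
inductive St (σ : Type) : Type where
  | plain : σ → St σ
  | bot : St σ
  | top : St σ

/-- Map a function on plain states over `St`, preserving `⊥` and `⊤`. -/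
def St.map {σ τ : Type} (f : σ → τ) : St σ → St τ
  | .plain p => .plain (f p)
  | .bot => .bot
  | .top => .top

/-- Interchange `⊤` and `⊥`. -/
def St.swap {σ : Type} : St σ → St σ
  | .plain p => .plain p
  | .bot => .top
  | .top => .bot

/-- Timed I/O transition system over action alphabet `Act`:
inputs `I`, outputs `O`, plain-state type `Sig`, initial state, and a
transition relation labelled by timed actions. -/
structure TIOTS (Act : Type) : Type 1 where
  Sig : Type
  I : Set Act
  O : Set Act
  init : St Sig
  tr : St Sig → TAct Act → St Sig → Prop

/-- Full (visible) alphabet of a TIOTS. -/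
def TIOTS.A {Act : Type} (P : TIOTS Act) : Set Act := P.I ∪ P.O

/-- Well-formedness: disjoint inputs/outputs, alphabet-respecting transitions,
`⊤` quiescent (exactly the delay self-loops), `⊥` chaotic (exactly the
self-loops for each timed action of the alphabet), and time additivity. -/
def WF {Act : Type} (P : TIOTS Act) : Prop :=
  Disjoint P.I P.O ∧
  (∀ s α s', P.tr s α s' → TAct.valid P.A α) ∧
  (∀ α (s' : St P.Sig), P.tr .top α s' ↔ (TAct.isDelay α ∧ s' = .top)) ∧
  (∀ α (s' : St P.Sig), P.tr .bot α s' ↔ (TAct.valid P.A α ∧ s' = .bot)) ∧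
  (∀ (p : P.Sig) (d e : Delay) (s' : St P.Sig),
      P.tr (.plain p) (.delay (dsum d e)) s' ↔
        ∃ s, P.tr (.plain p) (.delay d) s ∧ P.tr s (.delay e) s')

/-- Determinism: no ambiguous transitions. -/
def Deterministic {Act : Type} (P : TIOTS Act) : Prop :=
  ∀ s α s' s'', P.tr s α s' → P.tr s α s'' → s' = s''

/-- `α` is enabled at state `s`. -/
def enabled {Act : Type} (P : TIOTS Act) (s : St P.Sig) (α : TAct Act) : Prop :=
  ∃ s', P.tr s α s'

/-- `⊥`-completion: add `p →a ⊥` for every plain state `p` and input `a` not enabled at `p`. -/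
def botComplete {Act : Type} (P : TIOTS Act) : TIOTS Act :=
  { P with
    tr := fun s α s' =>
      P.tr s α s' ∨
        ((∃ p, s = St.plain p) ∧ (∃ a ∈ P.I, α = TAct.act a) ∧ ¬ enabled P s α ∧ s' = .bot) }

/-- `⊤`-completion: add `p →α ⊤` for every plain state `p` and timed output `α ∈ tO`
not enabled at `p`. -/
def topComplete {Act : Type} (P : TIOTS Act) : TIOTS Act :=
  { P with
    tr := fun s α s' =>
      P.tr s α s' ∨
        ((∃ p, s = St.plain p) ∧ TAct.valid P.O α ∧ ¬ enabled P s α ∧ s' = .top) }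

/-- `(P^⊥)^⊤`. -/
def TIOTS.complete {Act : Type} (P : TIOTS Act) : TIOTS Act := topComplete (botComplete P)

/-- Finite executions: `Exec P s w s'` holds when there is a finite execution from
`s` to `s'` whose trace (labels with adjacent delays coalesced) is `w`. -/
inductive Exec {Act : Type} (P : TIOTS Act) : St P.Sig → TWord Act → St P.Sig → Prop where
  | nil (s : St P.Sig) : Exec P s [] s
  | cons {s : St P.Sig} {α : TAct Act} {s' : St P.Sig} {w : TWord Act} {s'' : St P.Sig} :
      P.tr s α s' → Exec P s' w s'' → Exec P s (tcat [α] w) s''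

/-- `s` is reachable from the initial state via trace `w`. -/
def Reach {Act : Type} (P : TIOTS Act) (w : TWord Act) (s : St P.Sig) : Prop :=
  Exec P P.init w s

/-- `⊥`-freeness: `⊥` is not reachable from the initial state. -/
def BotFree {Act : Type} (P : TIOTS Act) : Prop := ∀ w, ¬ Reach P w .bot

/-- Error traces of `P`: traces of `(P^⊥)^⊤` leading to `⊥`. -/
def TEset {Act : Type} (P : TIOTS Act) : Set (TWord Act) := {w | Reach P.complete w .bot}

/-- Magic traces of `P`: traces of `(P^⊥)^⊤` leading to `⊤`. -/
def TMset {Act : Type} (P : TIOTS Act) : Set (TWord Act) := {w | Reach P.complete w .top}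

/-- Plain traces of `P`: traces of `(P^⊥)^⊤` leading to a plain state. -/
def TPset {Act : Type} (P : TIOTS Act) : Set (TWord Act) :=
  {w | ∃ p, Reach P.complete w (St.plain p)}

/-- Realisable traces: `TR = TE ∪ TP`. -/
def TRset {Act : Type} (P : TIOTS Act) : Set (TWord Act) := TEset P ∪ TPset P

/-- All traces: `TT = TE ∪ TP ∪ TM`. -/
def TTset {Act : Type} (P : TIOTS Act) : Set (TWord Act) := TEset P ∪ TPset P ∪ TMset P

/-- Composite plain-state space for binary operators: lone left states, lone right
states, and product states. -/
def CState (σ₀ σ₁ : Type) : Type := σ₀ ⊕ σ₁ ⊕ σ₀ × σ₁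

def pairSt {σ₀ σ₁ : Type} (p : σ₀) (q : σ₁) : CState σ₀ σ₁ := Sum.inr (Sum.inr (p, q))

def embL {σ₀ σ₁ : Type} : St σ₀ → St (CState σ₀ σ₁) := St.map (fun p => Sum.inl p)

def embR {σ₀ σ₁ : Type} : St σ₁ → St (CState σ₀ σ₁) := St.map (fun q => Sum.inr (Sum.inl q))

/-- State table for parallel composition: `⊤` if either is `⊤`, otherwise `⊥`
if either is `⊥`, otherwise the pair. -/
def stPar {σ₀ σ₁ : Type} : St σ₀ → St σ₁ → St (CState σ₀ σ₁)
  | .top, _ => .top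
  | _, .top => .top
  | .bot, _ => .bot
  | _, .bot => .bot
  | .plain p, .plain q => .plain (pairSt p q)

/-- State table for conjunction: `⊤` if either is `⊤`, otherwise the other
operand if either is `⊥`, otherwise the pair. -/
def stAnd {σ₀ σ₁ : Type} : St σ₀ → St σ₁ → St (CState σ₀ σ₁)
  | .top, _ => .top
  | _, .top => .top
  | .bot, .bot => .bot
  | .bot, .plain q => .plain (Sum.inr (Sum.inl q))
  | .plain p, .bot => .plain (Sum.inl p)
  | .plain p, .plain q => .plain (pairSt p q)

/-- State table for disjunction: `⊥` if either is `⊥`, otherwise the other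
operand if either is `⊤`, otherwise the pair. -/
def stOr {σ₀ σ₁ : Type} : St σ₀ → St σ₁ → St (CState σ₀ σ₁)
  | .bot, _ => .bot
  | _, .bot => .bot
  | .top, .top => .top
  | .top, .plain q => .plain (Sum.inr (Sum.inl q))
  | .plain p, .top => .plain (Sum.inl p)
  | .plain p, .plain q => .plain (pairSt p q)

/-- State table for quotient `s₀ % s₁`: `⊥` if `s₁ = ⊤`, or if `s₀ = ⊥` and `s₁ ≠ ⊤`;
`⊤` if `s₁ = ⊥` and `s₀ ≠ ⊥`, or if `s₀ = ⊤` and `s₁` plain; the pair if both plain. -/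
def stQuo {σ₀ σ₁ : Type} : St σ₀ → St σ₁ → St (CState σ₀ σ₁)
  | _, .top => .bot
  | .bot, _ => .bot
  | _, .bot => .top
  | .top, .plain _ => .top
  | .plain p, .plain q => .plain (pairSt p q)

/-- Synchronised product of two (already `⊥`- and `⊤`-completed) TIOTSs, with the
given state-combination table and alphabets. The transition relation contains the
embedded component transitions (on lone states); from product states, shared
actions and all delays synchronise while independent visible actions interleave;
`⊥` is chaotic and `⊤` quiescent. -/
def rawProd {Act : Type} (P Q : TIOTS Act)
    (comb : St P.Sig → St Q.Sig → St (CState P.Sig Q.Sig)) (I O : Set Act) : TIOTS Act where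
  Sig := CState P.Sig Q.Sig
  I := I
  O := O
  init := comb P.init Q.init
  tr := fun s α s' =>
    (∃ p s₀, s = St.plain (Sum.inl p) ∧ P.tr (.plain p) α s₀ ∧ s' = embL s₀) ∨
    (∃ q s₁, s = St.plain (Sum.inr (Sum.inl q)) ∧ Q.tr (.plain q) α s₁ ∧ s' = embR s₁) ∨
    (∃ p q, s = St.plain (pairSt p q) ∧
      ((TAct.valid (P.A ∩ Q.A) α ∧
          ∃ (s₀ : St P.Sig) (s₁ : St Q.Sig),
            P.tr (.plain p) α s₀ ∧ Q.tr (.plain q) α s₁ ∧ s' = comb s₀ s₁) ∨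
       (∃ a, α = TAct.act a ∧ a ∈ P.A \ Q.A ∧
          ∃ s₀ : St P.Sig, P.tr (.plain p) α s₀ ∧ s' = comb s₀ (.plain q)) ∨
       (∃ a, α = TAct.act a ∧ a ∈ Q.A \ P.A ∧
          ∃ s₁ : St Q.Sig, Q.tr (.plain q) α s₁ ∧ s' = comb (.plain p) s₁))) ∨
    (s = .bot ∧ TAct.valid (I ∪ O) α ∧ s' = .bot) ∨
    (s = .top ∧ TAct.isDelay α ∧ s' = .top)

/-- Parallel composition `P ∥ Q` (requires `∥`-composability: disjoint output sets). -/
def parC {Act : Type} (P Q : TIOTS Act) : TIOTS Act :=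
  rawProd P.complete Q.complete stPar ((P.I ∪ Q.I) \ (P.O ∪ Q.O)) (P.O ∪ Q.O)

/-- Conjunction `P ∧ Q` (requires identical alphabets). -/
def andC {Act : Type} (P Q : TIOTS Act) : TIOTS Act :=
  rawProd P.complete Q.complete stAnd P.I P.O

/-- Disjunction `P ∨ Q` (requires identical alphabets). -/
def orC {Act : Type} (P Q : TIOTS Act) : TIOTS Act :=
  rawProd P.complete Q.complete stOr P.I P.O

/-- Reduction of a subset of states in the subset construction: a subset containing
`⊥` becomes `⊥`; `⊤` is removed from any subset other than `{⊤}`. -/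
noncomputable def detSt {σ : Type} (X : Set (St σ)) : St (Set σ) :=
  if St.bot ∈ X then .bot
  else if X = {St.top} then .top
  else .plain {p | St.plain p ∈ X}

/-- Successor subset. -/
def post {Act : Type} (P : TIOTS Act) (X : Set P.Sig) (α : TAct Act) : Set (St P.Sig) :=
  {s' | ∃ p ∈ X, P.tr (.plain p) α s'}

/-- Determinisation `P^D` by subset construction on `(P^⊥)^⊤`. -/
noncomputable def TIOTS.det {Act : Type} (P : TIOTS Act) : TIOTS Act where
  Sig := Set P.Sig
  I := P.I
  O := P.O
  init := detSt {P.complete.init}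
  tr := fun s α s' =>
    (∃ X, s = St.plain X ∧ TAct.valid P.A α ∧ s' = detSt (post P.complete X α)) ∨
    (s = .bot ∧ TAct.valid P.A α ∧ s' = .bot) ∨
    (s = .top ∧ TAct.isDelay α ∧ s' = .top)

/-- Mirror `P¬`: determinise, then interchange inputs with outputs and `⊤` with `⊥`. -/
noncomputable def TIOTS.mirror {Act : Type} (P : TIOTS Act) : TIOTS Act where
  Sig := (P.det).Sig
  I := P.O
  O := P.I
  init := St.swap (P.det).init
  tr := fun s α s' => (P.det).tr (St.swap s) α (St.swap s')

/-- Alphabet domination: `A_Q ⊆ A_P` and `O_Q ⊆ O_P`. -/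
def Dominates {Act : Type} (P Q : TIOTS Act) : Prop := Q.A ⊆ P.A ∧ Q.O ⊆ P.O

/-- Quotient `P % Q` (requires that `P` dominates `Q`); `Q` is determinised first. -/
noncomputable def quoC {Act : Type} (P Q : TIOTS Act) : TIOTS Act :=
  rawProd P.complete (Q.det).complete stQuo (P.I ∪ Q.O) (P.O \ Q.O)

/-- `Q` is an environment for `P`: complementary alphabets. -/
def Env {Act : Type} (P Q : TIOTS Act) : Prop := Q.I = P.O ∧ Q.O = P.I

/-- Substitutive refinement: `Refines P Q` means `P ⊑ Q`, i.e. the alphabets agree and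
for every environment `R`, `⊥`-freeness of `P ∥ R` implies `⊥`-freeness of `Q ∥ R`. -/
def Refines {Act : Type} (P Q : TIOTS Act) : Prop :=
  P.I = Q.I ∧ P.O = Q.O ∧
  ∀ R : TIOTS Act, WF R → Env P R → BotFree (parC P R) → BotFree (parC Q R)

/-- Substitutive equivalence `P ≃ Q`. -/
def SEquiv {Act : Type} (P Q : TIOTS Act) : Prop := Refines P Q ∧ Refines Q P

/-- Enabled timed actions at a plain state. -/
def eb {Act : Type} (G : TIOTS Act) (p : G.Sig) : Set (TAct Act) :=
  {α | enabled G (.plain p) α}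

/-- The component move(s) proposed at a plain state: enabled outputs and delays. -/
def mvSet {Act : Type} (G : TIOTS Act) (p : G.Sig) : Set (TAct Act) :=
  {α | enabled G (.plain p) α ∧ TAct.valid G.O α}

/-- One-step relation between plain states. -/
def plainStep {Act : Type} (G : TIOTS Act) (p p' : G.Sig) : Prop :=
  ∃ α, G.tr (.plain p) α (.plain p')

/-- Tree TIOTS: acyclic (on plain states), no state is the target of both an action-
and a delay-transition, action transitions into the same state coincide, and delay
transitions into the same state have the same source. -/
def IsTree {Act : Type} (G : TIOTS Act) : Prop :=
  (∀ p, ¬ Relation.TransGen (plainStep G) p p) ∧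
  (∀ p p' p'' a d, G.tr (.plain p) (TAct.act a) (.plain p'') →
      G.tr (.plain p') (TAct.delay d) (.plain p'') → False) ∧
  (∀ p p' p'' a b, G.tr (.plain p) (TAct.act a) (.plain p'') →
      G.tr (.plain p') (TAct.act b) (.plain p'') → p = p' ∧ a = b) ∧
  (∀ p p' p'' d, G.tr (.plain p) (TAct.delay d) (.plain p'') →
      G.tr (.plain p') (TAct.delay d) (.plain p'') → p = p')

/-- Strategy: a deterministic tree TIOTS in which every plain state enables exactly
the inputs together with a unique component move, the move being a single output or
a nonempty set of delays. -/
def IsStrategy {Act : Type} (G : TIOTS Act) : Prop :=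
  WF G ∧ Deterministic G ∧ IsTree G ∧
  ∀ p : G.Sig,
    eb G p = {α | ∃ a ∈ G.I, α = TAct.act a} ∪ mvSet G p ∧
    ((∃ a ∈ G.O, mvSet G p = {TAct.act a}) ∨
      ((mvSet G p).Nonempty ∧ ∀ α ∈ mvSet G p, TAct.isDelay α))

/-- `G` is a partial unfolding of `Q`: a state map preserving `⊥`, `⊤`, plainness,
the initial state and the transitions. -/
def PartialUnfolding {Act : Type} (G Q : TIOTS Act) : Prop :=
  G.I = Q.I ∧ G.O = Q.O ∧
  ∃ f : G.Sig → Q.Sig,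
    St.map f G.init = Q.init ∧
    ∀ (p : G.Sig) (α : TAct Act) (s' : St G.Sig),
      G.tr (.plain p) α s' → Q.tr (.plain (f p)) α (St.map f s')

/-- Strategies contained in `P`: partial unfoldings of `(P^⊥)^⊤`. -/
def stg {Act : Type} (P : TIOTS Act) : Set (TIOTS Act) :=
  {G | IsStrategy G ∧ PartialUnfolding G P.complete}

/-- Affinity: identical alphabets and equal proposed moves after equal traces. -/
def Affine {Act : Type} (G G' : TIOTS Act) : Prop :=
  G.I = G'.I ∧ G.O = G'.O ∧
  ∀ (w : TWord Act) (p : G.Sig) (p' : G'.Sig),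
    Reach G w (.plain p) → Reach G' w (.plain p') → mvSet G p = mvSet G' p'

/-- Aggressiveness order `G ≼ G'` on affine strategies: `G` reaches `⊥` faster and
`⊤` slower than `G'`. -/
def Agg {Act : Type} (G G' : TIOTS Act) : Prop :=
  Affine G G' ∧
  (∀ w, Reach G' w .bot → ∃ w₀, Pref w₀ w ∧ Reach G w₀ .bot) ∧
  (∀ w, Reach G w .top → ∃ w₀, Pref w₀ w ∧ Reach G' w₀ .top)

/-- Strategy semantics `[P]_s`: upward closure of `stg(P)` w.r.t. `≼`. -/
def ssem {Act : Type} (P : TIOTS Act) : Set (TIOTS Act) :=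
  {G' | IsStrategy G' ∧ ∃ G ∈ stg P, Agg G G'}

/-- Strategy disjunction `G + G'` of (affine) strategies: their synchronised
`∨`-product, without further completion. -/
def stratPlus {Act : Type} (G G' : TIOTS Act) : TIOTS Act := rawProd G G' stOr G.I G.O

/-- Isomorphism of TIOTSs. -/
def TIso {Act : Type} (P Q : TIOTS Act) : Prop :=
  P.I = Q.I ∧ P.O = Q.O ∧
  ∃ e : P.Sig ≃ Q.Sig,
    St.map (fun x => e x) P.init = Q.init ∧
    ∀ s α s', P.tr s α s' ↔ Q.tr (St.map (fun x => e x) s) α (St.map (fun x => e x) s')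

/-- Disjunction closure of a set of strategies (strategies are identified up to
isomorphism): least superset closed under `+` of affine pairs. -/
inductive DClos {Act : Type} (S : Set (TIOTS Act)) : TIOTS Act → Prop where
  | base {G} : G ∈ S → DClos S G
  | disj {G G'} : DClos S G → DClos S G' → Affine G G' → DClos S (stratPlus G G')
  | iso {G G'} : DClos S G → TIso G G' → DClos S G'

/-- Disjunction closure `Π⁺` as a set. -/
def dclos {Act : Type} (S : Set (TIOTS Act)) : Set (TIOTS Act) := {G | DClos S G}

/-- `[P]_s⁺`. -/
def sClos {Act : Type} (P : TIOTS Act) : Set (TIOTS Act) := dclos (ssem P)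

/-- Coin strategies: functions from histories to `{0,1}`. -/
abbrev Coin (Act : Type) := TWord Act → Bool

/-- The strategy proposes output `a` at `p`. -/
def proposesA {Act : Type} (G : TIOTS Act) (p : G.Sig) (a : Act) : Prop :=
  TAct.act a ∈ mvSet G p

/-- The strategy proposes delay `d` at `p`. -/
def proposesD {Act : Type} (G : TIOTS Act) (p : G.Sig) (d : Delay) : Prop :=
  TAct.delay d ∈ mvSet G p

/-- Game-state combination for plays (game states carry the history). -/
def stPlay {Act : Type} {σ₀ σ₁ : Type} (w : TWord Act) :
    St σ₀ → St σ₁ → St (σ₀ × σ₁ × TWord Act)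
  | .top, _ => .top
  | _, .top => .top
  | .bot, _ => .bot
  | _, .bot => .bot
  | .plain p, .plain q => .plain (p, q, w)

/-- A component fires `α` if `α` is in its timed alphabet, and stays put otherwise. -/
def stepOrStay {Act : Type} (G : TIOTS Act) (p : G.Sig) (α : TAct Act) (s : St G.Sig) : Prop :=
  (TAct.valid G.A α ∧ G.tr (.plain p) α s) ∨ (¬ TAct.valid G.A α ∧ s = .plain p)

/-- Inputs that fire autonomously at a game state: synchronised inputs and
independent inputs. -/
def firedInput {Act : Type} (GP GQ : TIOTS Act) (a : Act) : Prop :=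
  a ∈ GP.I ∩ GQ.I ∨ (a ∈ GP.I ∪ GQ.I ∧ a ∉ GP.A ∩ GQ.A)

/-- The timed action `α` fires at game state `(p, q)` with history `w`: it is a fired
input, or a prevailing component move (an action prevails over a delay, the common
delays prevail when both propose delays, and the coin `h` resolves ties between two
proposed actions: `false` lets the left strategy win). -/
def fired {Act : Type} (GP GQ : TIOTS Act) (h : Coin Act) (p : GP.Sig) (q : GQ.Sig)
    (w : TWord Act) : TAct Act → Prop
  | TAct.act a =>
      firedInput GP GQ a ∨
      (proposesA GP p a ∧ ((∃ b, proposesA GQ q b) → h w = false)) ∨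
      (proposesA GQ q a ∧ ((∃ b, proposesA GP p b) → h w = true))
  | TAct.delay d => proposesD GP p d ∧ proposesD GQ q d

/-- The play `G_P ∥_h G_Q` of two strategies with composable alphabets against a
coin strategy `h`: a tree TIOTS over game states carrying histories. -/
def play {Act : Type} (GP GQ : TIOTS Act) (h : Coin Act) : TIOTS Act where
  Sig := GP.Sig × GQ.Sig × TWord Act
  I := (GP.I ∪ GQ.I) \ (GP.O ∪ GQ.O)
  O := GP.O ∪ GQ.O
  init := stPlay [] GP.init GQ.init
  tr := fun s α s' =>
    (∃ p q w, s = St.plain (p, q, w) ∧ fired GP GQ h p q w α ∧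
      ∃ (s₀ : St GP.Sig) (s₁ : St GQ.Sig),
        stepOrStay GP p α s₀ ∧ stepOrStay GQ q α s₁ ∧
        s' = stPlay (tcat w [α]) s₀ s₁) ∨
    (s = .bot ∧ TAct.valid (GP.A ∪ GQ.A) α ∧ s' = .bot) ∨
    (s = .top ∧ TAct.isDelay α ∧ s' = .top)

/-- Projection of a timed word onto a sub-alphabet: delete visible actions outside
the sub-alphabet and coalesce adjacent delays. -/
noncomputable def projW {Act : Type} (A : Set Act) (w : TWord Act) : TWord Act :=
  w.foldr (fun α acc =>
    match α with
    | TAct.act a => if a ∈ A then tcat [TAct.act a] acc else acc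
    | TAct.delay d => tcat [TAct.delay d] acc) []


/-! ### Auxiliary material for Statement 18 -/

section Aux18

variable {Act : Type}

@[simp] lemma St.swap_swap {σ : Type} (s : St σ) : s.swap.swap = s := by
  cases s <;> rfl

@[simp] lemma St.swap_plain {σ : Type} (p : σ) :
    (St.plain p).swap = St.plain p := rfl

@[simp] lemma St.swap_bot {σ : Type} : (St.bot : St σ).swap = St.top := rfl
@[simp] lemma St.swap_top {σ : Type} : (St.top : St σ).swap = St.bot := rfl

lemma pairSt_inj {σ₀ σ₁ : Type} {p p' : σ₀} {q q' : σ₁}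
    (h : pairSt p q = pairSt p' q') : p = p' ∧ q = q' := by
  have h1 : (Sum.inr (Sum.inr (p, q)) : CState σ₀ σ₁) =
      Sum.inr (Sum.inr (p', q')) := h
  injection h1 with h2
  injection h2 with h3
  injection h3 with h4 h5
  exact ⟨h4, h5⟩

/-- Facts about `stPar`. -/
@[simp] lemma stPar_top_left {σ₀ σ₁ : Type} (y : St σ₁) :
    stPar (St.top : St σ₀) y = St.top := by cases y <;> rfl

@[simp] lemma stPar_plain_plain {σ₀ σ₁ : Type} (p : σ₀) (q : σ₁) :
    stPar (St.plain p) (St.plain q) = St.plain (pairSt p q) := rfl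

lemma stPar_bot_left {σ₀ σ₁ : Type} {y : St σ₁} (hy : y ≠ St.top) :
    stPar (St.bot : St σ₀) y = St.bot := by cases y <;> simp_all [stPar]

lemma stPar_bot_right {σ₀ σ₁ : Type} {x : St σ₀} (hx : x ≠ St.top) :
    stPar x (St.bot : St σ₁) = St.bot := by cases x <;> simp_all [stPar]

lemma stPar_eq_plain {σ₀ σ₁ : Type} {x : St σ₀} {y : St σ₁} {z} :
    stPar x y = St.plain z →
      ∃ p q, x = St.plain p ∧ y = St.plain q ∧ z = pairSt p q := by
  cases x <;> cases y <;> simp_all [stPar] <;> tauto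

lemma stPar_eq_bot {σ₀ σ₁ : Type} {x : St σ₀} {y : St σ₁}
    (h : stPar x y = St.bot) :
    x ≠ St.top ∧ y ≠ St.top ∧ (x = St.bot ∨ y = St.bot) := by
  cases x <;> cases y <;> simp_all [stPar]

lemma stPar_eq_top_iff {σ₀ σ₁ : Type} {x : St σ₀} {y : St σ₁} :
    stPar x y = St.top ↔ (x = St.top ∨ y = St.top) := by
  cases x <;> cases y <;> simp [stPar]

/-- Facts about `stQuo`. -/
@[simp] lemma stQuo_bot_left {σ₀ σ₁ : Type} (y : St σ₁) :
    stQuo (St.bot : St σ₀) y = St.bot := by cases y <;> rfl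

@[simp] lemma stQuo_top_right {σ₀ σ₁ : Type} (x : St σ₀) :
    stQuo x (St.top : St σ₁) = St.bot := by cases x <;> rfl

@[simp] lemma stQuo_plain_plain {σ₀ σ₁ : Type} (p : σ₀) (q : σ₁) :
    stQuo (St.plain p) (St.plain q) = St.plain (pairSt p q) := rfl

lemma stQuo_eq_plain {σ₀ σ₁ : Type} {x : St σ₀} {y : St σ₁} {z}
    (h : stQuo x y = St.plain z) :
    ∃ p q, x = St.plain p ∧ y = St.plain q ∧ z = pairSt p q := by
  cases x <;> cases y <;> simp_all [stQuo] <;> tauto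

lemma stQuo_eq_bot {σ₀ σ₁ : Type} {x : St σ₀} {y : St σ₁}
    (h : stQuo x y = St.bot) : y = St.top ∨ x = St.bot := by
  cases x <;> cases y <;> simp_all [stQuo]

/-- Facts about `detSt`. -/
lemma detSt_eq_bot_iff {σ : Type} {X : Set (St σ)} :
    detSt X = St.bot ↔ St.bot ∈ X := by
  unfold detSt; split_ifs <;> simp_all

lemma detSt_eq_top_iff {σ : Type} {X : Set (St σ)} :
    detSt X = St.top ↔ (St.bot ∉ X ∧ X = {St.top}) := by
  unfold detSt; split_ifs <;> simp_all

lemma detSt_eq_plain {σ : Type} {X : Set (St σ)} {Y : Set σ}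
    (h : detSt X = St.plain Y) :
    St.bot ∉ X ∧ X ≠ {St.top} ∧ Y = {p | St.plain p ∈ X} := by
  unfold detSt at h
  split_ifs at h with h1 h2
  exact ⟨h1, h2, (St.plain.inj h).symm⟩

lemma detSt_plain_of {σ : Type} {X : Set (St σ)}
    (hb : St.bot ∉ X) (ht : X ≠ {St.top}) :
    detSt X = St.plain {p | St.plain p ∈ X} := by
  unfold detSt; split_ifs <;> simp_all

lemma eq_top_singleton_of {σ : Type} {X : Set (St σ)} (hne : X.Nonempty)
    (hb : St.bot ∉ X) (hp : ∀ p, St.plain p ∉ X) : X = {St.top} := by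
  ext s
  simp only [Set.mem_singleton_iff]
  constructor
  · intro hs
    cases s with
    | plain p => exact absurd hs (hp p)
    | bot => exact absurd hs hb
    | top => rfl
  · rintro rfl
    obtain ⟨x, hx⟩ := hne
    cases x with
    | plain p => exact absurd hx (hp p)
    | bot => exact absurd hx hb
    | top => exact hx

lemma exists_plain_mem {σ : Type} {X : Set (St σ)} (hne : X.Nonempty)
    (hb : St.bot ∉ X) (ht : X ≠ {St.top}) : ∃ p, St.plain p ∈ X := by
  by_contra h
  push_neg at h
  exact ht (eq_top_singleton_of hne hb h)

lemma detSt_content_nonempty {σ : Type} {X : Set (St σ)} {Y : Set σ}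
    (hne : X.Nonempty) (h : detSt X = St.plain Y) : Y.Nonempty := by
  obtain ⟨hb, ht, hY⟩ := detSt_eq_plain h
  obtain ⟨p, hp⟩ := exists_plain_mem hne hb ht
  exact ⟨p, by rw [hY]; exact hp⟩

/-- `valid` monotone. -/
lemma TAct.valid.mono {S T : Set Act} (h : S ⊆ T) {α : TAct Act} :
    TAct.valid S α → TAct.valid T α := by
  cases α <;> simp [TAct.valid] <;> exact fun ha => h ha

lemma valid_congr {S T : Set Act} (h : S = T) {α : TAct Act} :
    TAct.valid S α ↔ TAct.valid T α := by rw [h]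

/-- Basics of `complete`. -/
@[simp] lemma complete_I (P : TIOTS Act) : P.complete.I = P.I := rfl
@[simp] lemma complete_O (P : TIOTS Act) : P.complete.O = P.O := rfl
@[simp] lemma complete_A (P : TIOTS Act) : P.complete.A = P.A := rfl
@[simp] lemma complete_init (P : TIOTS Act) : P.complete.init = P.init := rfl

lemma complete_tr_of (P : TIOTS Act) {s α s'} (h : P.tr s α s') :
    P.complete.tr s α s' := Or.inl (Or.inl h)

lemma complete_enabled (P : TIOTS Act) (p : P.Sig) {α : TAct Act}
    (h : TAct.valid P.A α) : enabled P.complete (St.plain p) α := by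
  by_cases hb : enabled (botComplete P) (St.plain p) α
  · obtain ⟨s', hs'⟩ := hb
    exact ⟨s', Or.inl hs'⟩
  · -- top-completion applies provided `α` is a timed output
    have hvO : TAct.valid P.O α := by
      cases α with
      | delay d => trivial
      | act a =>
        rcases h with hI | hO
        · -- a ∈ P.I : bot-completion would give enabledness, contradiction
          exfalso
          apply hb
          by_cases he : enabled P (St.plain p) (TAct.act a)
          · obtain ⟨s', hs'⟩ := he
            exact ⟨s', Or.inl hs'⟩
          · exact ⟨St.bot, Or.inr ⟨⟨p, rfl⟩, ⟨a, hI, rfl⟩, he, rfl⟩⟩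
        · exact hO
    exact ⟨St.top, Or.inr ⟨⟨p, rfl⟩, hvO, hb, rfl⟩⟩

/-- If all valid actions are enabled at a plain state, completion adds nothing. -/
lemma complete_tr_plain_iff (P : TIOTS Act) {p : P.Sig}
    (hen : ∀ β, TAct.valid P.A β → enabled P (St.plain p) β) {α s'} :
    P.complete.tr (St.plain p) α s' ↔ P.tr (St.plain p) α s' := by
  constructor
  · rintro ((h | ⟨_, ⟨a, haI, rfl⟩, hne, _⟩) | ⟨_, hvO, hne, _⟩)
    · exact h
    · exact absurd (hen (TAct.act a) (show a ∈ P.I ∪ P.O from Or.inl haI)) hne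
    · exfalso
      apply hne
      obtain ⟨s'', hs''⟩ := hen α (hvO.mono Set.subset_union_right)
      exact ⟨s'', Or.inl hs''⟩
  · exact complete_tr_of P

/-- Membership in `post`. -/
lemma mem_post {P : TIOTS Act} {X : Set P.Sig} {α : TAct Act} {s'} :
    s' ∈ post P X α ↔ ∃ p ∈ X, P.tr (St.plain p) α s' := Iff.rfl

lemma post_nonempty {P : TIOTS Act} {X : Set P.complete.Sig} {α : TAct Act}
    (hX : X.Nonempty) (h : TAct.valid P.A α) :
    (post P.complete X α).Nonempty := by
  obtain ⟨p, hp⟩ := hX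
  obtain ⟨s', hs'⟩ := complete_enabled P p h
  exact ⟨s', p, hp, hs'⟩

/-- Characterisation of `det` transitions from plain states. -/
lemma det_tr_plain (P : TIOTS Act) {X : Set P.Sig} {α : TAct Act} {s'} :
    P.det.tr (St.plain X) α s' ↔
      (TAct.valid P.A α ∧ s' = detSt (post P.complete X α)) := by
  constructor
  · rintro (⟨X', hX', hv, hs'⟩ | ⟨h, _⟩ | ⟨h, _⟩)
    · cases hX'; exact ⟨hv, hs'⟩
    · exact absurd h (by simp)
    · exact absurd h (by simp)
  · rintro ⟨hv, hs'⟩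
    exact Or.inl ⟨X, rfl, hv, hs'⟩

@[simp] lemma det_I (P : TIOTS Act) : P.det.I = P.I := rfl
@[simp] lemma det_O (P : TIOTS Act) : P.det.O = P.O := rfl
@[simp] lemma det_A (P : TIOTS Act) : P.det.A = P.A := rfl

lemma det_enabled (P : TIOTS Act) (X : Set P.Sig) {α : TAct Act}
    (h : TAct.valid P.A α) : enabled P.det (St.plain X) α :=
  ⟨detSt (post P.complete X α), (det_tr_plain P).2 ⟨h, rfl⟩⟩

/-- `det`-complete transitions from plain states. -/
lemma detC_tr_plain (P : TIOTS Act) {X : Set P.Sig} {α : TAct Act} {s'} :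
    (P.det).complete.tr (St.plain X) α s' ↔
      (TAct.valid P.A α ∧ s' = detSt (post P.complete X α)) := by
  rw [complete_tr_plain_iff _ (fun β hβ => det_enabled P X hβ)]
  exact det_tr_plain P

/-- Mirror transitions from plain states. -/
@[simp] lemma mirror_I (P : TIOTS Act) : (TIOTS.mirror P).I = P.O := rfl
@[simp] lemma mirror_O (P : TIOTS Act) : (TIOTS.mirror P).O = P.I := rfl

lemma mirror_A (P : TIOTS Act) : (TIOTS.mirror P).A = P.A :=
  Set.union_comm _ _

lemma mirror_tr_plain (P : TIOTS Act) {X : Set P.Sig} {α : TAct Act} {s'} :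
    (TIOTS.mirror P).tr (St.plain X) α s' ↔
      (TAct.valid P.A α ∧ s' = St.swap (detSt (post P.complete X α))) := by
  show P.det.tr (St.swap (St.plain X)) α (St.swap s') ↔ _
  erw [St.swap_plain, det_tr_plain]
  constructor
  · rintro ⟨hv, h⟩
    exact ⟨hv, by erw [← h, St.swap_swap]⟩
  · rintro ⟨hv, h⟩
    exact ⟨hv, by erw [h, St.swap_swap]⟩

lemma mirror_enabled (P : TIOTS Act) (X : Set P.Sig) {α : TAct Act}
    (h : TAct.valid P.A α) : enabled (TIOTS.mirror P) (St.plain X) α :=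
  ⟨St.swap (detSt (post P.complete X α)), (mirror_tr_plain P).2 ⟨h, rfl⟩⟩

lemma mirrorC_tr_plain (P : TIOTS Act) {X : Set P.Sig} {α : TAct Act} {s'} :
    (TIOTS.mirror P).complete.tr (St.plain X) α s' ↔
      (TAct.valid P.A α ∧ s' = St.swap (detSt (post P.complete X α))) := by
  rw [complete_tr_plain_iff _
    (fun β hβ => mirror_enabled P X ((valid_congr (mirror_A P)).1 hβ))]
  exact mirror_tr_plain P

/-- No escape from the timestop state in a raw product. -/
lemma rawProd_exec_top {P Q : TIOTS Act} {comb I O} {s w s'}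
    (h : Exec (rawProd P Q comb I O) s w s') (hs : s = St.top) :
    s' = St.top := by
  induction h with
  | nil => exact hs
  | cons htr hex ih =>
    subst hs
    rcases htr with ⟨p, s₀, h, _⟩ | ⟨q, s₁, h, _⟩ | ⟨p, q, h, _⟩ |
      ⟨h, _⟩ | ⟨_, _, h⟩
    · exact absurd h (by simp)
    · exact absurd h (by simp)
    · exact absurd h (by simp)
    · exact absurd h (by simp)
    · exact ih h

/-- Transitions of a raw product from a plain pair state. -/
lemma rawProd_tr_pair {P Q : TIOTS Act} {comb I O} {p q α s'} :
    (rawProd P Q comb I O).tr (St.plain (pairSt p q)) α s' ↔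
      ((TAct.valid (P.A ∩ Q.A) α ∧
          ∃ s₀ s₁, P.tr (St.plain p) α s₀ ∧ Q.tr (St.plain q) α s₁ ∧
            s' = comb s₀ s₁) ∨
       (∃ a, α = TAct.act a ∧ a ∈ P.A \ Q.A ∧
          ∃ s₀, P.tr (St.plain p) α s₀ ∧ s' = comb s₀ (St.plain q)) ∨
       (∃ a, α = TAct.act a ∧ a ∈ Q.A \ P.A ∧
          ∃ s₁, Q.tr (St.plain q) α s₁ ∧ s' = comb (St.plain p) s₁)) := by
  constructor
  · rintro (⟨p', s₀, hp', _⟩ | ⟨q', s₁, hq', _⟩ | ⟨p', q', hpq, h⟩ |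
      ⟨h, _⟩ | ⟨h, _⟩)
    · exfalso
      have h2 := St.plain.inj hp'
      simp only [pairSt] at h2
      exact absurd h2 (by simp)
    · exfalso
      have h2 := St.plain.inj hq'
      simp only [pairSt] at h2
      injection h2 with h3
      exact absurd h3 (by simp)
    · obtain ⟨h1, h2⟩ := pairSt_inj (St.plain.inj hpq)
      subst h1; subst h2
      exact h
    · exact absurd h (by simp)
    · exact absurd h (by simp)
  · intro h
    exact Or.inr (Or.inr (Or.inl ⟨p, q, rfl, h⟩))

/-- Pair states of a parallel product with a fixed (determinised) left component. -/
def NPairs {σ₀ σ₁ : Type} (Z : Set σ₀) (Y : Set σ₁) : Set (CState (Set σ₀) σ₁) :=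
  {n | ∃ q ∈ Y, n = pairSt Z q}

lemma NPairs_nonempty {σ₀ σ₁ : Type} {Z : Set σ₀} {Y : Set σ₁}
    (h : Y.Nonempty) : (NPairs Z Y).Nonempty := by
  obtain ⟨q, hq⟩ := h
  exact ⟨pairSt Z q, q, hq, rfl⟩

/-- The aggregated (determinised) value of the mirrored parallel product,
as a function of the determinised component values. -/
def dVal {σ₀ σ₁ : Type} :
    St (Set σ₀) → St (Set σ₁) → St (Set (CState (Set σ₀) σ₁))
  | .bot, _ => .top
  | _, .top => .top
  | .top, _ => .bot
  | .plain _, .bot => .bot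
  | .plain Z, .plain Y => .plain (NPairs Z Y)

@[simp] lemma dVal_bot_left {σ₀ σ₁ : Type} (y : St (Set σ₁)) :
    dVal (St.bot : St (Set σ₀)) y = St.top := by cases y <;> rfl

@[simp] lemma dVal_top_right {σ₀ σ₁ : Type} (x : St (Set σ₀)) :
    dVal x (St.top : St (Set σ₁)) = St.top := by cases x <;> rfl

lemma dVal_top_left {σ₀ σ₁ : Type} {y : St (Set σ₁)} (hy : y ≠ St.top) :
    dVal (St.top : St (Set σ₀)) y = St.bot := by cases y <;> simp_all [dVal]

@[simp] lemma dVal_plain_bot {σ₀ σ₁ : Type} (Z : Set σ₀) :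
    dVal (St.plain Z) (St.bot : St (Set σ₁)) = St.bot := rfl

@[simp] lemma dVal_plain_plain {σ₀ σ₁ : Type} (Z : Set σ₀) (Y : Set σ₁) :
    dVal (St.plain Z) (St.plain Y) = St.plain (NPairs Z Y) := rfl

lemma dVal_eq_plain {σ₀ σ₁ : Type} {x : St (Set σ₀)} {y : St (Set σ₁)} {W}
    (h : dVal x y = St.plain W) :
    ∃ Z Y, x = St.plain Z ∧ y = St.plain Y ∧ W = NPairs Z Y := by
  cases x <;> cases y <;> simp_all [dVal] <;> tauto

lemma dVal_eq_bot {σ₀ σ₁ : Type} {x : St (Set σ₀)} {y : St (Set σ₁)}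
    (h : dVal x y = St.bot) :
    (x = St.top ∧ y ≠ St.top) ∨ (∃ Z, x = St.plain Z ∧ y = St.bot) := by
  cases x <;> cases y <;> simp_all [dVal]

lemma dVal_eq_top {σ₀ σ₁ : Type} {x : St (Set σ₀)} {y : St (Set σ₁)}
    (h : dVal x y = St.top) : x = St.bot ∨ y = St.top := by
  cases x <;> cases y <;> simp_all [dVal]

/-- `detSt` of an image set, all of whose members are `⊤`. -/
lemma detSt_image_top {τ ρ : Type} {T : Set τ} {g : τ → St ρ}
    (hT : T.Nonempty) (h : ∀ s ∈ T, g s = St.top) :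
    detSt {n | ∃ s ∈ T, n = g s} = St.top := by
  apply detSt_eq_top_iff.2
  constructor
  · rintro ⟨s, hs, hgs⟩
    rw [h s hs] at hgs
    exact absurd hgs (by simp)
  · ext n
    constructor
    · rintro ⟨s, hs, rfl⟩
      rw [h s hs]; rfl
    · rintro rfl
      obtain ⟨s, hs⟩ := hT
      exact ⟨s, hs, (h s hs).symm⟩

/-- `detSt` of an image set containing `⊥`. -/
lemma detSt_image_bot {τ ρ : Type} {T : Set τ} {g : τ → St ρ}
    (h : ∃ s ∈ T, g s = St.bot) :
    detSt {n | ∃ s ∈ T, n = g s} = St.bot := by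
  apply detSt_eq_bot_iff.2
  obtain ⟨s, hs, hgs⟩ := h
  exact ⟨s, hs, hgs.symm⟩

/-- `detSt` of an image set with no `⊥` and at least one plain member. -/
lemma detSt_image_plain {τ ρ : Type} {T : Set τ} {g : τ → St ρ}
    (hnb : ∀ s ∈ T, g s ≠ St.bot) (hp : ∃ s ∈ T, ∃ n, g s = St.plain n) :
    detSt {n | ∃ s ∈ T, n = g s} =
      St.plain {n | ∃ s ∈ T, g s = St.plain n} := by
  have hb : St.bot ∉ {n | ∃ s ∈ T, n = g s} := by
    rintro ⟨s, hs, hgs⟩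
    exact hnb s hs hgs.symm
  have ht : {n | ∃ s ∈ T, n = g s} ≠ {St.top} := by
    intro he
    obtain ⟨s, hs, n, hn⟩ := hp
    have : g s ∈ ({St.top} : Set (St ρ)) := he ▸ ⟨s, hs, rfl⟩
    rw [hn] at this
    simp at this
  rw [detSt_plain_of hb ht]
  congr 1
  ext n
  constructor
  · rintro ⟨s, hs, hgs⟩
    exact ⟨s, hs, hgs.symm⟩
  · rintro ⟨s, hs, hgs⟩
    exact ⟨s, hs, hgs.symm⟩

end Aux18

section Quot18

variable {Act : Type} {P₀ P₁ : TIOTS Act}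

lemma inter_A₀₁ (hdom : Dominates P₀ P₁) : P₀.A ∩ P₁.A = P₁.A :=
  Set.inter_eq_right.2 hdom.1

lemma quo_A (hdom : Dominates P₀ P₁) : (quoC P₀ P₁).A = P₀.A := by
  ext x
  show x ∈ (P₀.I ∪ P₁.O) ∪ (P₀.O \ P₁.O) ↔ x ∈ P₀.I ∪ P₀.O
  constructor
  · rintro ((h | h) | ⟨h, _⟩)
    · exact Or.inl h
    · exact Or.inr (hdom.2 h)
    · exact Or.inr h
  · rintro (h | h)
    · exact Or.inl (Or.inl h)
    · by_cases h1 : x ∈ P₁.O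
      · exact Or.inl (Or.inr h1)
      · exact Or.inr ⟨h, h1⟩

lemma N_A (hdom : Dominates P₀ P₁) :
    (parC (TIOTS.mirror P₀) P₁).A = P₀.A := by
  show (((P₀.O ∪ P₁.I) \ (P₀.I ∪ P₁.O)) ∪ (P₀.I ∪ P₁.O)) = _
  rw [Set.diff_union_self]
  ext x
  constructor
  · rintro ((h | h) | (h | h))
    · exact Or.inr h
    · exact hdom.1 (Or.inl h)
    · exact Or.inl h
    · exact Or.inr (hdom.2 h)
  · rintro (h | h)
    · exact Or.inr (Or.inl h)
    · exact Or.inl (Or.inl h)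

lemma Q_A (hdom : Dominates P₀ P₁) :
    (TIOTS.mirror (parC (TIOTS.mirror P₀) P₁)).A = P₀.A := by
  rw [mirror_A]; exact N_A hdom

lemma quo_I_eq :
    (quoC P₀ P₁).I = (TIOTS.mirror (parC (TIOTS.mirror P₀) P₁)).I := rfl

lemma quo_O_eq (hdisj : Disjoint P₀.I P₀.O) (hdom : Dominates P₀ P₁) :
    (quoC P₀ P₁).O = (TIOTS.mirror (parC (TIOTS.mirror P₀) P₁)).O := by
  show P₀.O \ P₁.O = (P₀.O ∪ P₁.I) \ (P₀.I ∪ P₁.O)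
  ext x
  constructor
  · rintro ⟨hO, hn⟩
    refine ⟨Or.inl hO, ?_⟩
    rintro (hI | h1)
    · exact (Set.disjoint_left.1 hdisj) hI hO
    · exact hn h1
  · rintro ⟨(hO | hI), hn⟩
    · exact ⟨hO, fun h => hn (Or.inr h)⟩
    · rcases hdom.1 (Or.inl hI) with h0I | h0O
      · exact absurd (Or.inl h0I) hn
      · exact ⟨h0O, fun h => hn (Or.inr h)⟩

/-- Characterisation of quotient transitions from plain pair states. -/
lemma quo_tr_pair (hdom : Dominates P₀ P₁) {p Y α s'} :
    (quoC P₀ P₁).tr (St.plain (pairSt p Y)) α s' ↔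
      ((TAct.valid P₁.A α ∧ ∃ s₀, P₀.complete.tr (St.plain p) α s₀ ∧
          s' = stQuo s₀ (detSt (post P₁.complete Y α))) ∨
       (∃ a, α = TAct.act a ∧ a ∈ P₀.A \ P₁.A ∧
          ∃ s₀, P₀.complete.tr (St.plain p) α s₀ ∧
            s' = stQuo s₀ (St.plain Y))) := by
  erw [show (quoC P₀ P₁).tr = (rawProd P₀.complete (P₁.det).complete stQuo
    (P₀.I ∪ P₁.O) (P₀.O \ P₁.O)).tr from rfl, rawProd_tr_pair]
  have hAA : P₀.complete.A ∩ (P₁.det).complete.A = P₁.A := by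
    show P₀.A ∩ P₁.A = P₁.A
    exact inter_A₀₁ hdom
  constructor
  · rintro (⟨hv, s₀, s₁, h₀, h₁, rfl⟩ | ⟨a, rfl, ha, s₀, h₀, rfl⟩ |
      ⟨a, rfl, ha, _⟩)
    · obtain ⟨hv₁, rfl⟩ := (detC_tr_plain P₁).1 h₁
      exact Or.inl ⟨hv₁, s₀, h₀, rfl⟩
    · exact Or.inr ⟨a, rfl, ha, s₀, h₀, rfl⟩
    · exact absurd (hdom.1 ha.1) ha.2
  · rintro (⟨hv, s₀, h₀, rfl⟩ | ⟨a, rfl, ha, s₀, h₀, rfl⟩)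
    · exact Or.inl ⟨(valid_congr hAA).2 hv, s₀, _,
        h₀, (detC_tr_plain P₁).2 ⟨hv, rfl⟩, rfl⟩
    · exact Or.inr (Or.inl ⟨a, rfl, ha, s₀, h₀, rfl⟩)

lemma valid_dichotomy (hv : TAct.valid P₀.A α) :
    TAct.valid P₁.A α ∨ ∃ a, α = TAct.act a ∧ a ∈ P₀.A \ P₁.A := by
  cases α with
  | delay d => exact Or.inl trivial
  | act a =>
    by_cases h : a ∈ P₁.A
    · exact Or.inl h
    · exact Or.inr ⟨a, rfl, hv, h⟩

lemma quo_enabled_pair (hdom : Dominates P₀ P₁) {p Y α}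
    (hv : TAct.valid P₀.A α) :
    enabled (quoC P₀ P₁) (St.plain (pairSt p Y)) α := by
  obtain ⟨s₀, h₀⟩ := complete_enabled P₀ p hv
  rcases valid_dichotomy (α := α) hv with hv₁ | ⟨a, rfl, ha⟩
  · exact ⟨_, (quo_tr_pair hdom).2 (Or.inl ⟨hv₁, s₀, h₀, rfl⟩)⟩
  · exact ⟨_, (quo_tr_pair hdom).2 (Or.inr ⟨a, rfl, ha, s₀, h₀, rfl⟩)⟩

/-- Completion adds nothing at plain pair states of the quotient. -/
lemma quoC_tr_pair (hdom : Dominates P₀ P₁) {p Y α s'} :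
    (quoC P₀ P₁).complete.tr (St.plain (pairSt p Y)) α s' ↔
      ((TAct.valid P₁.A α ∧ ∃ s₀, P₀.complete.tr (St.plain p) α s₀ ∧
          s' = stQuo s₀ (detSt (post P₁.complete Y α))) ∨
       (∃ a, α = TAct.act a ∧ a ∈ P₀.A \ P₁.A ∧
          ∃ s₀, P₀.complete.tr (St.plain p) α s₀ ∧
            s' = stQuo s₀ (St.plain Y))) := by
  rw [complete_tr_plain_iff _ (fun β hβ =>
    quo_enabled_pair hdom ((valid_congr (quo_A hdom)).1 hβ))]
  exact quo_tr_pair hdom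

/-- Characterisation of transitions of `P₀¬ ∥ P₁` from plain pair states. -/
lemma N_tr_pair (hdom : Dominates P₀ P₁) {Z q α n'} :
    (parC (TIOTS.mirror P₀) P₁).tr (St.plain (pairSt Z q)) α n' ↔
      ((TAct.valid P₁.A α ∧ ∃ s₁, P₁.complete.tr (St.plain q) α s₁ ∧
          n' = stPar (St.swap (detSt (post P₀.complete Z α))) s₁) ∨
       (∃ a, α = TAct.act a ∧ a ∈ P₀.A \ P₁.A ∧
          n' = stPar (St.swap (detSt (post P₀.complete Z α)))
            (St.plain q))) := by
  erw [show (parC (TIOTS.mirror P₀) P₁).tr =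
    (rawProd (TIOTS.mirror P₀).complete P₁.complete stPar
      (((TIOTS.mirror P₀).I ∪ P₁.I) \ ((TIOTS.mirror P₀).O ∪ P₁.O))
      ((TIOTS.mirror P₀).O ∪ P₁.O)).tr from rfl, rawProd_tr_pair]
  have hAA : (TIOTS.mirror P₀).complete.A ∩ P₁.complete.A = P₁.A := by
    show (TIOTS.mirror P₀).A ∩ P₁.A = P₁.A
    rw [mirror_A]
    exact inter_A₀₁ hdom
  have hDD : (TIOTS.mirror P₀).complete.A \ P₁.complete.A = P₀.A \ P₁.A := by
    show (TIOTS.mirror P₀).A \ P₁.A = P₀.A \ P₁.A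
    rw [mirror_A]
  constructor
  · rintro (⟨hv, s₀, s₁, h₀, h₁, rfl⟩ | ⟨a, rfl, ha, s₀, h₀, rfl⟩ |
      ⟨a, rfl, ha, _⟩)
    · obtain ⟨_, rfl⟩ := (mirrorC_tr_plain P₀).1 h₀
      exact Or.inl ⟨(valid_congr hAA).1 hv, s₁, h₁, rfl⟩
    · obtain ⟨_, rfl⟩ := (mirrorC_tr_plain P₀).1 h₀
      exact Or.inr ⟨a, rfl, hDD ▸ ha, rfl⟩
    · have : a ∈ P₁.A := ha.1
      exact absurd (show a ∈ (TIOTS.mirror P₀).A from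
        (mirror_A P₀).symm ▸ hdom.1 this) ha.2
  · rintro (⟨hv, s₁, h₁, rfl⟩ | ⟨a, rfl, ha, rfl⟩)
    · have hv₀ : TAct.valid P₀.A α := hv.mono hdom.1
      exact Or.inl ⟨(valid_congr hAA).2 hv, _, s₁,
        (mirrorC_tr_plain P₀).2 ⟨hv₀, rfl⟩, h₁, rfl⟩
    · exact Or.inr (Or.inl ⟨a, rfl, hDD ▸ ha,
        _, (mirrorC_tr_plain P₀).2 ⟨ha.1, rfl⟩, rfl⟩)

lemma N_enabled_pair (hdom : Dominates P₀ P₁) {Z q α}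
    (hv : TAct.valid P₀.A α) :
    enabled (parC (TIOTS.mirror P₀) P₁) (St.plain (pairSt Z q)) α := by
  rcases valid_dichotomy (α := α) hv with hv₁ | ⟨a, rfl, ha⟩
  · obtain ⟨s₁, h₁⟩ := complete_enabled P₁ q hv₁
    exact ⟨_, (N_tr_pair hdom).2 (Or.inl ⟨hv₁, s₁, h₁, rfl⟩)⟩
  · exact ⟨_, (N_tr_pair hdom).2 (Or.inr ⟨a, rfl, ha, rfl⟩)⟩

lemma NC_tr_pair (hdom : Dominates P₀ P₁) {Z q α n'} :
    (parC (TIOTS.mirror P₀) P₁).complete.tr (St.plain (pairSt Z q)) α n' ↔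
      ((TAct.valid P₁.A α ∧ ∃ s₁, P₁.complete.tr (St.plain q) α s₁ ∧
          n' = stPar (St.swap (detSt (post P₀.complete Z α))) s₁) ∨
       (∃ a, α = TAct.act a ∧ a ∈ P₀.A \ P₁.A ∧
          n' = stPar (St.swap (detSt (post P₀.complete Z α)))
            (St.plain q))) := by
  rw [complete_tr_plain_iff _ (fun β hβ =>
    N_enabled_pair hdom ((valid_congr (N_A hdom)).1 hβ))]
  exact N_tr_pair hdom

/-- The set of successors of an aggregated state, synchronising case. -/
lemma postN_sync (hdom : Dominates P₀ P₁) {Z : Set P₀.Sig} {Y : Set P₁.Sig}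
    {α} (hv₁ : TAct.valid P₁.A α) :
    post (parC (TIOTS.mirror P₀) P₁).complete (NPairs Z Y) α =
      {n' | ∃ s₁ ∈ post P₁.complete Y α,
        n' = stPar (St.swap (detSt (post P₀.complete Z α))) s₁} := by
  ext n'
  constructor
  · rintro ⟨n, ⟨q, hq, rfl⟩, htr⟩
    rcases (NC_tr_pair hdom).1 htr with ⟨_, s₁, h₁, rfl⟩ | ⟨a, rfl, ha, _⟩
    · exact ⟨s₁, ⟨q, hq, h₁⟩, rfl⟩
    · exact absurd (show a ∈ P₁.A from hv₁) ha.2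
  · rintro ⟨s₁, ⟨q, hq, h₁⟩, rfl⟩
    exact ⟨pairSt Z q, ⟨q, hq, rfl⟩,
      (NC_tr_pair hdom).2 (Or.inl ⟨hv₁, s₁, h₁, rfl⟩)⟩

/-- The set of successors of an aggregated state, interleaving case. -/
lemma postN_indep (hdom : Dominates P₀ P₁) {Z : Set P₀.Sig} {Y : Set P₁.Sig}
    {a} (ha : a ∈ P₀.A \ P₁.A) :
    post (parC (TIOTS.mirror P₀) P₁).complete (NPairs Z Y) (TAct.act a) =
      {n' | ∃ q ∈ Y, n' =
        stPar (St.swap (detSt (post P₀.complete Z (TAct.act a))))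
          ((St.plain q : St P₁.Sig))} := by
  ext n'
  constructor
  · rintro ⟨n, ⟨q, hq, rfl⟩, htr⟩
    rcases (NC_tr_pair hdom).1 htr with ⟨hv₁, _, _, _⟩ | ⟨b, hb, _, rfl⟩
    · exact absurd (show a ∈ P₁.A from hv₁) ha.2
    · exact ⟨q, hq, rfl⟩
  · rintro ⟨q, hq, rfl⟩
    exact ⟨pairSt Z q, ⟨q, hq, rfl⟩,
      (NC_tr_pair hdom).2 (Or.inr ⟨a, rfl, ha, rfl⟩)⟩

/-- KEY: the determinised aggregate successor, synchronising case. -/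
lemma key_sync (hdom : Dominates P₀ P₁) {Z : Set P₀.Sig} {Y : Set P₁.Sig}
    {α} (hY : Y.Nonempty) (hv₁ : TAct.valid P₁.A α) :
    detSt (post (parC (TIOTS.mirror P₀) P₁).complete (NPairs Z Y) α) =
      dVal (detSt (post P₀.complete Z α)) (detSt (post P₁.complete Y α)) := by
  rw [postN_sync hdom hv₁]
  have hT₁ : (post P₁.complete Y α).Nonempty := post_nonempty hY hv₁
  rcases he₀ : detSt (post P₀.complete Z α) with Z' | _ | _
  · -- e₀ plain
    rcases hd₁ : detSt (post P₁.complete Y α) with Y' | _ | _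
    · -- d₁ plain : aggregate is plain with content `NPairs Z' Y'`
      obtain ⟨hb₁, ht₁, hY'⟩ := detSt_eq_plain hd₁
      rw [dVal_plain_plain]
      refine (detSt_image_plain ?_ ?_).trans ?_
      · intro s₁ hs₁ hbot
        obtain ⟨_, _, h⟩ := stPar_eq_bot hbot
        rcases h with h | h
        · exact absurd h (by simp)
        · subst h; exact hb₁ hs₁
      · obtain ⟨q', hq'⟩ := exists_plain_mem hT₁ hb₁ ht₁
        exact ⟨St.plain q', hq', _, rfl⟩
      · congr 1
        ext n
        constructor
        · rintro ⟨s₁, hs₁, hn⟩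
          obtain ⟨Z'', q', hZ'', hq', rfl⟩ := stPar_eq_plain hn
          have hZZ : Z' = Z'' := St.plain.inj hZ''
          cases hZZ
          subst hq'
          exact ⟨q', by rw [hY']; exact hs₁, rfl⟩
        · rintro ⟨q', hq', rfl⟩
          rw [hY'] at hq'
          exact ⟨St.plain q', hq', rfl⟩
    · -- d₁ = ⊥ : some B₁-successor is ⊥, aggregate collapses to ⊥
      rw [dVal_plain_bot]
      exact detSt_image_bot ⟨St.bot, detSt_eq_bot_iff.1 hd₁,
        stPar_bot_right (x := (St.plain Z' : St (Set P₀.Sig)).swap) (fun h => by cases h)⟩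
    · -- d₁ = ⊤ : all B₁-successors are ⊤
      obtain ⟨_, hT⟩ := detSt_eq_top_iff.1 hd₁
      rw [dVal_top_right]
      apply detSt_image_top hT₁
      intro s hs
      rw [hT] at hs
      cases hs
      rfl
  · -- e₀ = ⊥ : mirrored component is ⊤, aggregate is ⊤
    rw [dVal_bot_left]
    exact detSt_image_top hT₁ (fun s _ => by rw [St.swap_bot, stPar_top_left]; rfl)
  · -- e₀ = ⊤ : mirrored component is ⊥
    rcases hd₁ : detSt (post P₁.complete Y α) with Y' | _ | _
    · -- d₁ plain : there is a non-⊤ B₁-successor, aggregate is ⊥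
      obtain ⟨hb₁, ht₁, _⟩ := detSt_eq_plain hd₁
      obtain ⟨q', hq'⟩ := exists_plain_mem hT₁ hb₁ ht₁
      rw [dVal_top_left (by simp)]
      exact detSt_image_bot ⟨St.plain q', hq', rfl⟩
    · -- d₁ = ⊥
      rw [dVal_top_left (by simp)]
      exact detSt_image_bot ⟨St.bot, detSt_eq_bot_iff.1 hd₁, rfl⟩
    · -- d₁ = ⊤ : all composite successors are ⊤
      obtain ⟨_, hT⟩ := detSt_eq_top_iff.1 hd₁
      rw [dVal_top_right]
      apply detSt_image_top hT₁
      intro s hs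
      rw [hT] at hs
      cases hs
      rfl

/-- KEY: the determinised aggregate successor, interleaving case. -/
lemma key_indep (hdom : Dominates P₀ P₁) {Z : Set P₀.Sig} {Y : Set P₁.Sig}
    {a} (hY : Y.Nonempty) (ha : a ∈ P₀.A \ P₁.A) :
    detSt (post (parC (TIOTS.mirror P₀) P₁).complete (NPairs Z Y)
        (TAct.act a)) =
      dVal (detSt (post P₀.complete Z (TAct.act a))) (St.plain Y) := by
  rw [postN_indep hdom ha]
  rcases he₀ : detSt (post P₀.complete Z (TAct.act a)) with Z' | _ | _
  · rw [dVal_plain_plain]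
    refine (detSt_image_plain ?_ ?_).trans ?_
    · intro q _ h
      obtain ⟨_, _, hc⟩ := stPar_eq_bot h
      rcases hc with hc | hc <;> exact absurd hc (by simp)
    · obtain ⟨q, hq⟩ := hY
      exact ⟨q, hq, _, rfl⟩
    · congr 1
      ext n
      constructor
      · rintro ⟨q, hq, hn⟩
        exact ⟨q, hq, (St.plain.inj hn).symm⟩
      · rintro ⟨q, hq, rfl⟩
        exact ⟨q, hq, rfl⟩
  · rw [dVal_bot_left]
    exact detSt_image_top hY (fun q _ => by rw [St.swap_bot, stPar_top_left]; rfl)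
  · rw [dVal_top_left (by simp)]
    obtain ⟨q, hq⟩ := hY
    exact detSt_image_bot ⟨q, hq, rfl⟩

end Quot18

section Main18

variable {Act : Type} {P₀ P₁ R : TIOTS Act}

@[simp] lemma stPar_top_right {σ₀ σ₁ : Type} (x : St σ₀) :
    stPar x (St.top : St σ₁) = St.top := by cases x <;> rfl

lemma stQuo_top_left {σ₀ σ₁ : Type} {y : St σ₁} (hy : y ≠ St.top) :
    stQuo (St.top : St σ₀) y = St.top := by cases y <;> simp_all [stQuo]

lemma stQuo_bot_right {σ₀ σ₁ : Type} {x : St σ₀} (hx : x ≠ St.bot) :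
    stQuo x (St.bot : St σ₁) = St.top := by cases x <;> simp_all [stQuo]

lemma parC_exec_top {X : TIOTS Act} {s w s'}
    (h : Exec (parC X R) s w s') (hs : s = St.top) : s' = St.top :=
  rawProd_exec_top h hs

lemma parC_tr_pair {X : TIOTS Act} (hXA : X.A = P₀.A) (hRA : R.A = P₀.A)
    {x : X.Sig} {r : R.Sig} {α s'} :
    (parC X R).tr (St.plain (pairSt x r)) α s' ↔
      (TAct.valid P₀.A α ∧ ∃ sx sr, X.complete.tr (St.plain x) α sx ∧
        R.complete.tr (St.plain r) α sr ∧ s' = stPar sx sr) := by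
  erw [show (parC X R).tr = (rawProd X.complete R.complete stPar
    ((X.I ∪ R.I) \ (X.O ∪ R.O)) (X.O ∪ R.O)).tr from rfl, rawProd_tr_pair]
  have hAA : X.complete.A ∩ R.complete.A = P₀.A := by
    show X.A ∩ R.A = P₀.A
    rw [hXA, hRA, Set.inter_self]
  constructor
  · rintro (⟨hv, sx, sr, hx, hr, rfl⟩ | ⟨a, rfl, ha, _⟩ | ⟨a, rfl, ha, _⟩)
    · exact ⟨(valid_congr hAA).1 hv, sx, sr, hx, hr, rfl⟩
    · exfalso
      apply ha.2
      show a ∈ R.A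
      rw [hRA, ← hXA]
      exact ha.1
    · exfalso
      apply ha.2
      show a ∈ X.A
      rw [hXA, ← hRA]
      exact ha.1
  · rintro ⟨hv, sx, sr, hx, hr, rfl⟩
    exact Or.inl ⟨(valid_congr hAA).2 hv, sx, sr, hx, hr, rfl⟩

lemma CQ_tr_pair (hdom : Dominates P₀ P₁) (hRA : R.A = P₀.A)
    {X : Set (parC (TIOTS.mirror P₀) P₁).Sig} {r : R.Sig} {α s'} :
    (parC (TIOTS.mirror (parC (TIOTS.mirror P₀) P₁)) R).tr
      (St.plain (pairSt X r)) α s' ↔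
    (TAct.valid P₀.A α ∧ ∃ sr, R.complete.tr (St.plain r) α sr ∧
      s' = stPar (St.swap (detSt
        (post (parC (TIOTS.mirror P₀) P₁).complete X α))) sr) := by
  erw [parC_tr_pair (Q_A hdom) hRA]
  constructor
  · rintro ⟨hv, sx, sr, hx, hr, rfl⟩
    obtain ⟨_, rfl⟩ := (mirrorC_tr_plain _).1 hx
    exact ⟨hv, sr, hr, rfl⟩
  · rintro ⟨hv, sr, hr, rfl⟩
    exact ⟨hv, _, sr, (mirrorC_tr_plain _).2
      ⟨(valid_congr (N_A hdom)).2 hv, rfl⟩, hr, rfl⟩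

/-- Direction 1: errors of the derived operator are matched by the quotient. -/
lemma dir1 (hdom : Dominates P₀ P₁) (hRA : R.A = P₀.A) {w s b}
    (hex : Exec (parC (TIOTS.mirror (parC (TIOTS.mirror P₀) P₁)) R) s w b) :
    b = St.bot → ∀ (Z : Set P₀.Sig) (Y : Set P₁.Sig) (r : R.Sig),
      s = St.plain (pairSt (NPairs Z Y) r) → Z.Nonempty → Y.Nonempty →
      ∃ p ∈ Z, ∃ w', Exec (parC (quoC P₀ P₁) R)
        (St.plain (pairSt (pairSt p Y) r)) w' St.bot := by
  induction hex with
  | nil =>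
    intro hb Z Y r hs _ _
    rw [hb] at hs
    exact absurd hs (by simp)
  | @cons s α s' w s'' htr hex' ih =>
    intro hb Z Y r hs hZ hY
    subst hb
    subst hs
    obtain ⟨hv, sr, hr, hs'⟩ := (CQ_tr_pair hdom hRA).1 htr
    obtain ⟨s₁v, H1, H2, H3⟩ :
        ∃ s₁v : St (Set P₁.Sig),
          detSt (post (parC (TIOTS.mirror P₀) P₁).complete (NPairs Z Y) α)
            = dVal (detSt (post P₀.complete Z α)) s₁v ∧
          (∀ (p : P₀.Sig) (s₀ : St P₀.Sig),
            P₀.complete.tr (St.plain p) α s₀ →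
            (quoC P₀ P₁).tr (St.plain (pairSt p Y)) α (stQuo s₀ s₁v)) ∧
          (∀ Y', s₁v = St.plain Y' → Y'.Nonempty) := by
      rcases valid_dichotomy (α := α) hv with hv₁ | ⟨a, rfl, ha⟩
      · refine ⟨detSt (post P₁.complete Y α), key_sync hdom hY hv₁, ?_, ?_⟩
        · intro p s₀ h₀
          exact (quo_tr_pair hdom).2 (Or.inl ⟨hv₁, s₀, h₀, rfl⟩)
        · intro Y' hY'
          exact detSt_content_nonempty (post_nonempty hY hv₁) hY'
      · refine ⟨St.plain Y, key_indep hdom hY ha, ?_, ?_⟩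
        · intro p s₀ h₀
          exact (quo_tr_pair hdom).2 (Or.inr ⟨a, rfl, ha, s₀, h₀, rfl⟩)
        · intro Y' hY'
          cases St.plain.inj hY'
          exact hY
    erw [H1] at hs'
    have hpost₀ : (post P₀.complete Z α).Nonempty := post_nonempty hZ hv
    -- generic construction of a one-step error in the quotient composition
    have hmk : ∀ p ∈ Z, ∀ su, (quoC P₀ P₁).tr (St.plain (pairSt p Y)) α su →
        stPar su sr = St.bot →
        ∃ p ∈ Z, ∃ w', Exec (parC (quoC P₀ P₁) R)
          (St.plain (pairSt (pairSt p Y) r)) w' St.bot := by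
      intro p hp su hstep hpar
      have hstep2 := (parC_tr_pair (quo_A hdom) hRA).2
        ⟨hv, su, sr, complete_tr_of _ hstep, hr, rfl⟩
      erw [hpar] at hstep2
      exact ⟨p, hp, _, Exec.cons hstep2 (Exec.nil _)⟩
    rcases hdv : dVal (detSt (post P₀.complete Z α)) s₁v with W | _ | _ <;>
      rw [hdv] at hs'
    · -- aggregate plain
      obtain ⟨Z', Y', he₀, hs₁v, hW⟩ := dVal_eq_plain hdv
      erw [St.swap_plain] at hs'
      rcases sr with r' | _ | _
      · -- R stays plain : recurse
        erw [stPar_plain_plain] at hs'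
        have hZ' : Z'.Nonempty := detSt_content_nonempty hpost₀ he₀
        have hY' : Y'.Nonempty := H3 Y' hs₁v
        obtain ⟨p', hp', w', hex₂⟩ := ih rfl Z' Y' r'
          (by rw [hs', hW]; rfl) hZ' hY'
        obtain ⟨hb₀, _, hZc⟩ := detSt_eq_plain he₀
        have hp'mem : St.plain p' ∈ post P₀.complete Z α := by
          have : p' ∈ {p | St.plain p ∈ post P₀.complete Z α} := hZc ▸ hp'
          exact this
        obtain ⟨p, hpZ, h₀⟩ := hp'mem
        have hstep2 := (parC_tr_pair (quo_A hdom) hRA).2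
          ⟨hv, _, _, complete_tr_of _ (H2 p (St.plain p') h₀), hr, rfl⟩
        erw [hs₁v, stQuo_plain_plain, stPar_plain_plain] at hstep2
        exact ⟨p, hpZ, _, Exec.cons hstep2 hex₂⟩
      · -- R turns ⊥ : one-step error
        have hZ' : Z'.Nonempty := detSt_content_nonempty hpost₀ he₀
        obtain ⟨p', hp'⟩ := hZ'
        obtain ⟨hb₀, _, hZc⟩ := detSt_eq_plain he₀
        have hp'mem : St.plain p' ∈ post P₀.complete Z α := by
          have : p' ∈ {p | St.plain p ∈ post P₀.complete Z α} := hZc ▸ hp'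
          exact this
        obtain ⟨p, hpZ, h₀⟩ := hp'mem
        refine hmk p hpZ _ (H2 p (St.plain p') h₀) ?_
        erw [hs₁v, stQuo_plain_plain]
        exact stPar_bot_right (fun h => by cases h)
      · -- R turns ⊤ : the composite is ⊤, contradiction
        rw [stPar_top_right] at hs'
        exact absurd (parC_exec_top hex' hs') (by simp)
    · -- aggregate ⊥ : the mirrored side is ⊤, composite ⊤, contradiction
      erw [St.swap_bot, stPar_top_left] at hs'
      exact absurd (parC_exec_top hex' hs') (by simp)
    · -- aggregate ⊤ : the derived operator errs now
      erw [St.swap_top] at hs'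
      have hsrt : sr ≠ St.top := by
        intro h
        subst h
        rw [stPar_top_right] at hs'
        exact absurd (parC_exec_top hex' hs') (by simp)
      rcases dVal_eq_top hdv with he₀ | hs₁v
      · -- P₀ can err
        have hbmem : St.bot ∈ post P₀.complete Z α := detSt_eq_bot_iff.1 he₀
        obtain ⟨p, hpZ, h₀⟩ := hbmem
        refine hmk p hpZ _ (H2 p St.bot h₀) ?_
        erw [stQuo_bot_left]
        exact stPar_bot_left hsrt
      · -- P₁ timestops
        obtain ⟨p, hpZ⟩ := hZ
        obtain ⟨s₀, h₀⟩ := complete_enabled P₀ p hv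
        refine hmk p hpZ _ (H2 p s₀ h₀) ?_
        erw [hs₁v, stQuo_top_right]
        exact stPar_bot_left hsrt

/-- Direction 2: errors of the quotient are matched by the derived operator. -/
lemma dir2 (hdom : Dominates P₀ P₁) (hRA : R.A = P₀.A) {w s b}
    (hex : Exec (parC (quoC P₀ P₁) R) s w b) :
    b = St.bot → ∀ (p : P₀.Sig) (Z : Set P₀.Sig) (Y : Set P₁.Sig) (r : R.Sig),
      s = St.plain (pairSt (pairSt p Y) r) → p ∈ Z → Y.Nonempty →
      ∃ w', Exec (parC (TIOTS.mirror (parC (TIOTS.mirror P₀) P₁)) R)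
        (St.plain (pairSt (NPairs Z Y) r)) w' St.bot := by
  induction hex with
  | nil =>
    intro hb p Z Y r hs _ _
    rw [hb] at hs
    exact absurd hs (by simp)
  | @cons s α s' w s'' htr hex' ih =>
    intro hb p Z Y r hs hpZ hY
    subst hb
    subst hs
    obtain ⟨hv, su, sr, hqu, hr, hs'⟩ := (parC_tr_pair (quo_A hdom) hRA).1 htr
    have hqu' := (quoC_tr_pair hdom).1 hqu
    obtain ⟨s₁v, s₀, h₀, hsu, H1, H3⟩ :
        ∃ (s₁v : St (Set P₁.Sig)) (s₀ : St P₀.Sig),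
          P₀.complete.tr (St.plain p) α s₀ ∧ su = stQuo s₀ s₁v ∧
          detSt (post (parC (TIOTS.mirror P₀) P₁).complete (NPairs Z Y) α)
            = dVal (detSt (post P₀.complete Z α)) s₁v ∧
          (∀ Y', s₁v = St.plain Y' → Y'.Nonempty) := by
      rcases hqu' with ⟨hv₁, s₀, h₀, rfl⟩ | ⟨a, rfl, ha, s₀, h₀, rfl⟩
      · exact ⟨_, s₀, h₀, rfl, key_sync hdom hY hv₁,
          fun Y' h => detSt_content_nonempty (post_nonempty hY hv₁) h⟩
      · refine ⟨St.plain Y, s₀, h₀, rfl, key_indep hdom hY ha, ?_⟩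
        intro Y' h
        cases St.plain.inj h
        exact hY
    subst hsu
    have hs₀mem : s₀ ∈ post P₀.complete Z α := ⟨p, hpZ, h₀⟩
    have hmk : ∀ s₂, s₂ = stPar (St.swap
        (dVal (detSt (post P₀.complete Z α)) s₁v)) sr →
        (parC (TIOTS.mirror (parC (TIOTS.mirror P₀) P₁)) R).tr
          (St.plain (pairSt (NPairs Z Y) r)) α s₂ := by
      intro s₂ h₂
      refine (CQ_tr_pair hdom hRA).2 ⟨hv, sr, hr, ?_⟩
      rw [h₂, H1]; rfl
    rcases hsp : stPar (stQuo s₀ s₁v) sr with z' | _ | _ <;> erw [hsp] at hs'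
    · -- composite stays plain
      obtain ⟨u', r', hsu', hsr, hz'⟩ := stPar_eq_plain hsp
      obtain ⟨p', Y', hs₀, hs₁v, hu'⟩ := stQuo_eq_plain hsu'
      subst hsr
      rcases he₀ : detSt (post P₀.complete Z α) with Z' | _ | _
      · -- determinised P₀ stays plain : recurse
        obtain ⟨_, _, hZc⟩ := detSt_eq_plain he₀
        have hp' : p' ∈ Z' := by
          rw [hZc]
          rw [hs₀] at hs₀mem
          exact hs₀mem
        obtain ⟨w', hex₂⟩ := ih rfl p' Z' Y' r'
          (by erw [hs', hz', hu']; rfl) hp' (H3 Y' hs₁v)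
        refine ⟨_, Exec.cons (hmk (St.plain (pairSt (NPairs Z' Y') r')) ?_)
          hex₂⟩
        erw [he₀, hs₁v, dVal_plain_plain, St.swap_plain, stPar_plain_plain]
      · -- determinised P₀ collapses to ⊥ : the derived operator errs now
        refine ⟨_, Exec.cons (hmk St.bot ?_) (Exec.nil _)⟩
        erw [he₀, dVal_bot_left, St.swap_top]
        exact (stPar_bot_left (by simp)).symm
      · -- impossible: a plain successor exists
        obtain ⟨_, hT⟩ := detSt_eq_top_iff.1 he₀
        rw [hs₀, hT] at hs₀mem
        exact absurd (Set.mem_singleton_iff.1 hs₀mem) (fun h => by cases h)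
    · -- composite errs : match it
      obtain ⟨hsut, hsrt, hor⟩ := stPar_eq_bot hsp
      have hQnt : St.swap (dVal (detSt (post P₀.complete Z α)) s₁v) ≠
          St.top := by
        intro h
        have hdb : dVal (detSt (post P₀.complete Z α)) s₁v = St.bot := by
          rcases hx : dVal (detSt (post P₀.complete Z α)) s₁v with _ | _ | _ <;>
            rw [hx] at h <;> simp_all
        rcases dVal_eq_bot hdb with ⟨he₀, hnt⟩ | ⟨Z', he₀, hs₁v⟩
        · obtain ⟨_, hT⟩ := detSt_eq_top_iff.1 he₀
          rw [hT] at hs₀mem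
          cases hs₀mem
          exact hsut (stQuo_top_left hnt)
        · have hs₀nb : s₀ ≠ St.bot := by
            intro hh
            rw [hh] at hs₀mem
            rw [detSt_eq_bot_iff.2 hs₀mem] at he₀
            exact absurd he₀ (by simp)
          rw [hs₁v] at hsut
          exact hsut (stQuo_bot_right hs₀nb)
      have hQb : stQuo s₀ s₁v = St.bot →
          St.swap (dVal (detSt (post P₀.complete Z α)) s₁v) = St.bot := by
        intro h
        rcases stQuo_eq_bot h with hs₁v | hs₀
        · rw [hs₁v, dVal_top_right, St.swap_top]
        · rw [hs₀] at hs₀mem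
          rw [detSt_eq_bot_iff.2 hs₀mem, dVal_bot_left, St.swap_top]
      have htarget : stPar (St.swap
          (dVal (detSt (post P₀.complete Z α)) s₁v)) sr = St.bot := by
        rcases hor with hsu | hsr
        · rw [hQb hsu]
          exact stPar_bot_left hsrt
        · rw [hsr]
          exact stPar_bot_right hQnt
      exact ⟨_, Exec.cons (hmk St.bot htarget.symm) (Exec.nil _)⟩
    · -- composite is ⊤ : contradiction
      exact absurd (parC_exec_top hex' hs') (by simp)

lemma detSt_singleton_plain {σ : Type} (p : σ) :
    detSt ({St.plain p} : Set (St σ)) = St.plain {p} := by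
  have ht : ({St.plain p} : Set (St σ)) ≠ {St.top} := by
    intro h
    have : St.plain p ∈ ({St.top} : Set (St σ)) := h ▸ rfl
    simp at this
  rw [detSt_plain_of (by simp) ht]
  congr 1
  ext q
  simp

lemma detSt_singleton_bot {σ : Type} :
    detSt ({St.bot} : Set (St σ)) = St.bot := detSt_eq_bot_iff.2 rfl

lemma detSt_singleton_top {σ : Type} :
    detSt ({St.top} : Set (St σ)) = St.top := detSt_eq_top_iff.2 ⟨by simp, rfl⟩

lemma NPairs_singleton {σ₀ σ₁ : Type} (Z : Set σ₀) (q : σ₁) :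
    NPairs Z {q} = {pairSt Z q} := by
  ext n
  simp [NPairs]

/-- Status of the initial states of the two operators. -/
lemma inits :
    (∃ p₀ q₀, P₀.init = St.plain p₀ ∧ P₁.init = St.plain q₀ ∧
      (quoC P₀ P₁).init = St.plain (pairSt p₀ ({q₀} : Set P₁.Sig)) ∧
      (TIOTS.mirror (parC (TIOTS.mirror P₀) P₁)).init =
        St.plain (NPairs ({p₀} : Set P₀.Sig) ({q₀} : Set P₁.Sig))) ∨
    ((quoC P₀ P₁).init = St.bot ∧
      (TIOTS.mirror (parC (TIOTS.mirror P₀) P₁)).init = St.bot) ∨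
    ((quoC P₀ P₁).init = St.top ∧
      (TIOTS.mirror (parC (TIOTS.mirror P₀) P₁)).init = St.top) := by
  have hqu : (quoC P₀ P₁).init = stQuo P₀.init (detSt {P₁.init}) := rfl
  have hqq : (TIOTS.mirror (parC (TIOTS.mirror P₀) P₁)).init =
      St.swap (detSt {stPar (St.swap (detSt {P₀.init})) P₁.init}) := rfl
  rcases h0 : P₀.init with p₀ | _ | _ <;> rcases h1 : P₁.init with q₀ | _ | _ <;>
    rw [h0, h1] at hqu hqq
  · -- plain, plain
    rw [detSt_singleton_plain] at hqu
    rw [detSt_singleton_plain (p := p₀)] at hqq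
    rw [show stPar (St.swap (St.plain ({p₀} : Set P₀.Sig)))
      (St.plain q₀ : St P₁.Sig) = St.plain (pairSt {p₀} q₀) from rfl] at hqq
    rw [detSt_singleton_plain] at hqq
    refine Or.inl ⟨p₀, q₀, rfl, rfl, hqu, ?_⟩
    rw [NPairs_singleton]
    exact hqq
  · -- plain, bot
    rw [detSt_singleton_bot] at hqu
    rw [detSt_singleton_plain (p := p₀)] at hqq
    rw [show stPar (St.swap (St.plain ({p₀} : Set P₀.Sig)))
      (St.bot : St P₁.Sig) = St.bot from rfl, detSt_singleton_bot] at hqq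
    exact Or.inr (Or.inr ⟨hqu, hqq⟩)
  · -- plain, top
    rw [detSt_singleton_top] at hqu
    rw [detSt_singleton_plain (p := p₀)] at hqq
    rw [show stPar (St.swap (St.plain ({p₀} : Set P₀.Sig)))
      (St.top : St P₁.Sig) = St.top from rfl, detSt_singleton_top] at hqq
    exact Or.inr (Or.inl ⟨hqu, hqq⟩)
  · -- bot, plain
    rw [detSt_singleton_plain] at hqu
    rw [detSt_singleton_bot (σ := P₀.Sig)] at hqq
    rw [show stPar (St.swap (St.bot : St (Set P₀.Sig)))
      (St.plain q₀ : St P₁.Sig) = St.top from rfl, detSt_singleton_top] at hqq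
    exact Or.inr (Or.inl ⟨hqu, hqq⟩)
  · -- bot, bot
    rw [detSt_singleton_bot] at hqu
    rw [detSt_singleton_bot (σ := P₀.Sig)] at hqq
    rw [show stPar (St.swap (St.bot : St (Set P₀.Sig)))
      (St.bot : St P₁.Sig) = St.top from rfl, detSt_singleton_top] at hqq
    exact Or.inr (Or.inl ⟨hqu, hqq⟩)
  · -- bot, top
    rw [detSt_singleton_top] at hqu
    rw [detSt_singleton_bot (σ := P₀.Sig)] at hqq
    rw [show stPar (St.swap (St.bot : St (Set P₀.Sig)))
      (St.top : St P₁.Sig) = St.top from rfl, detSt_singleton_top] at hqq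
    exact Or.inr (Or.inl ⟨hqu, hqq⟩)
  · -- top, plain
    rw [detSt_singleton_plain] at hqu
    rw [detSt_singleton_top (σ := P₀.Sig)] at hqq
    rw [show stPar (St.swap (St.top : St (Set P₀.Sig)))
      (St.plain q₀ : St P₁.Sig) = St.bot from rfl, detSt_singleton_bot] at hqq
    exact Or.inr (Or.inr ⟨hqu, hqq⟩)
  · -- top, bot
    rw [detSt_singleton_bot] at hqu
    rw [detSt_singleton_top (σ := P₀.Sig)] at hqq
    rw [show stPar (St.swap (St.top : St (Set P₀.Sig)))
      (St.bot : St P₁.Sig) = St.bot from rfl, detSt_singleton_bot] at hqq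
    exact Or.inr (Or.inr ⟨hqu, hqq⟩)
  · -- top, top
    rw [detSt_singleton_top] at hqu
    rw [detSt_singleton_top (σ := P₀.Sig)] at hqq
    rw [show stPar (St.swap (St.top : St (Set P₀.Sig)))
      (St.top : St P₁.Sig) = St.top from rfl, detSt_singleton_top] at hqq
    exact Or.inr (Or.inl ⟨hqu, hqq⟩)

/-- Transfer of errors from the derived operator to the quotient. -/
lemma transfer1 (hdom : Dominates P₀ P₁) (hRA : R.A = P₀.A) {w}
    (hw : Reach (parC (TIOTS.mirror (parC (TIOTS.mirror P₀) P₁)) R) w St.bot) :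
    ∃ w', Reach (parC (quoC P₀ P₁) R) w' St.bot := by
  have hw' : Exec (parC (TIOTS.mirror (parC (TIOTS.mirror P₀) P₁)) R)
      (stPar (TIOTS.mirror (parC (TIOTS.mirror P₀) P₁)).init R.init)
      w St.bot := hw
  have hgoal : ∀ w', Exec (parC (quoC P₀ P₁) R)
      (stPar (quoC P₀ P₁).init R.init) w' St.bot →
      ∃ w'', Reach (parC (quoC P₀ P₁) R) w'' St.bot :=
    fun w' h => ⟨w', h⟩
  rcases inits (P₀ := P₀) (P₁ := P₁) with
    ⟨p₀, q₀, h0, h1, hqu, hqq⟩ | ⟨hqu, hqq⟩ | ⟨hqu, hqq⟩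
  · rw [hqq] at hw'
    rcases hri : R.init with r₀ | _ | _ <;> rw [hri] at hw'
    · erw [stPar_plain_plain] at hw'
      obtain ⟨p, hp, w', hex⟩ := dir1 hdom hRA hw' rfl {p₀} {q₀} r₀ rfl
        ⟨p₀, rfl⟩ ⟨q₀, rfl⟩
      rw [Set.mem_singleton_iff] at hp
      subst hp
      apply hgoal w'
      erw [hqu, hri, stPar_plain_plain]
      exact hex
    · apply hgoal []
      erw [hqu, hri, stPar_bot_right (fun h => by cases h)]
      exact Exec.nil _
    · erw [stPar_top_right] at hw'
      exact absurd (parC_exec_top hw' rfl) (by simp)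
  · rw [hqq] at hw'
    rcases hri : R.init with r₀ | _ | _ <;> rw [hri] at hw'
    · apply hgoal []
      erw [hqu, hri, stPar_bot_left (fun h => by cases h)]
      exact Exec.nil _
    · apply hgoal []
      erw [hqu, hri, stPar_bot_left (fun h => by cases h)]
      exact Exec.nil _
    · erw [stPar_top_right] at hw'
      exact absurd (parC_exec_top hw' rfl) (by simp)
  · erw [hqq, stPar_top_left] at hw'
    exact absurd (parC_exec_top hw' rfl) (by simp)

/-- Transfer of errors from the quotient to the derived operator. -/
lemma transfer2 (hdom : Dominates P₀ P₁) (hRA : R.A = P₀.A) {w}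
    (hw : Reach (parC (quoC P₀ P₁) R) w St.bot) :
    ∃ w', Reach (parC (TIOTS.mirror (parC (TIOTS.mirror P₀) P₁)) R)
      w' St.bot := by
  have hw' : Exec (parC (quoC P₀ P₁) R)
      (stPar (quoC P₀ P₁).init R.init) w St.bot := hw
  have hgoal : ∀ w', Exec (parC (TIOTS.mirror (parC (TIOTS.mirror P₀) P₁)) R)
      (stPar (TIOTS.mirror (parC (TIOTS.mirror P₀) P₁)).init R.init)
      w' St.bot →
      ∃ w'', Reach (parC (TIOTS.mirror (parC (TIOTS.mirror P₀) P₁)) R)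
        w'' St.bot :=
    fun w' h => ⟨w', h⟩
  rcases inits (P₀ := P₀) (P₁ := P₁) with
    ⟨p₀, q₀, h0, h1, hqu, hqq⟩ | ⟨hqu, hqq⟩ | ⟨hqu, hqq⟩
  · rw [hqu] at hw'
    rcases hri : R.init with r₀ | _ | _ <;> rw [hri] at hw'
    · erw [stPar_plain_plain] at hw'
      obtain ⟨w', hex⟩ := dir2 hdom hRA hw' rfl p₀ {p₀} {q₀} r₀ rfl rfl
        ⟨q₀, rfl⟩
      apply hgoal w'
      erw [hqq, hri, stPar_plain_plain]
      exact hex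
    · apply hgoal []
      erw [hqq, hri, stPar_bot_right (fun h => by cases h)]
      exact Exec.nil _
    · erw [stPar_top_right] at hw'
      exact absurd (parC_exec_top hw' rfl) (by simp)
  · rw [hqu] at hw'
    rcases hri : R.init with r₀ | _ | _ <;> rw [hri] at hw'
    · apply hgoal []
      erw [hqq, hri, stPar_bot_left (fun h => by cases h)]
      exact Exec.nil _
    · apply hgoal []
      erw [hqq, hri, stPar_bot_left (fun h => by cases h)]
      exact Exec.nil _
    · erw [stPar_top_right] at hw'
      exact absurd (parC_exec_top hw' rfl) (by simp)
  · erw [hqu, stPar_top_left] at hw'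
    exact absurd (parC_exec_top hw' rfl) (by simp)

end Main18

/-- For TIOTSs `P₀` dominating `P₁`, the quotient coincides (up to
substitutive equivalence) with the derived operator: `P₀ % P₁ ≃ (P₀¬ ∥ P₁)¬`. -/
theorem quotient_eq_mirror_parallel_mirror {Act : Type} (P₀ P₁ : TIOTS Act)
    (h₀ : WF P₀) (h₁ : WF P₁) (hdom : Dominates P₀ P₁) :
    SEquiv (quoC P₀ P₁) (TIOTS.mirror (parC (TIOTS.mirror P₀) P₁)) := by
  have hdisj : Disjoint P₀.I P₀.O := h₀.1
  constructor
  · refine ⟨quo_I_eq, quo_O_eq hdisj hdom, ?_⟩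
    intro R _ hEnv hBF
    have hRA : R.A = P₀.A := by
      show R.I ∪ R.O = P₀.A
      rw [hEnv.1, hEnv.2, Set.union_comm]
      exact quo_A hdom
    intro w hw
    obtain ⟨w', hw'⟩ := transfer1 hdom hRA hw
    exact hBF w' hw'
  · refine ⟨quo_I_eq.symm, (quo_O_eq hdisj hdom).symm, ?_⟩
    intro R _ hEnv hBF
    have hRA : R.A = P₀.A := by
      show R.I ∪ R.O = P₀.A
      rw [hEnv.1, hEnv.2, Set.union_comm]
      exact Q_A hdom
    intro w hw
    obtain ⟨w', hw'⟩ := transfer2 hdom hRA hw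
    exact hBF w' hw'


end TSpec
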